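/- arXiv:2511.17981 — 7 statements merged into one kernel-verified Lean document; each statement's English description precedes it below -/
import Mathlib

section
/- Let (Ω, P) be a probability space, let ε and θ be independent integrable real-valued random variables, and let μ0 be a real number such that ω ↦ max(μ0 + ε(ω), θ(ω)) is integrable. Then E[max(μ0 + ε, θ)] ≥ E[max(μ0 + ε, E[θ])]. (Non-negativity of the switching value, Theorem 1.) -/
/-!
The map `t ↦ max a t` is convex, and at `c = E[θ]` it has the subgradient `1{a ≤ c}`, which
depends on `a = μ0 + ε` only. Integrating the supporting-line inequality
`max a t ≥ max a c + 1{a ≤ c} (t - c)` at `t = θ`, the correction term has mean zero because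
`θ - E[θ]` is centred and independent of `ε`.
-/

open MeasureTheory ProbabilityTheory

lemma max_add_ite_mul_sub_le (a c t : ℝ) :
    max a c + (if a ≤ c then 1 else 0) * (t - c) ≤ max a t := by
  split_ifs with h
  · simp [max_eq_right h]
  · simp [max_eq_left (not_le.mp h).le]

lemma ProbabilityTheory.IndepFun.integral_comp_mul_sub_integral
    {Ω 𝓧 : Type*} [MeasurableSpace Ω] [MeasurableSpace 𝓧] {P : Measure Ω}
    [IsProbabilityMeasure P] {X : Ω → 𝓧} {Y : Ω → ℝ} {f : 𝓧 → ℝ}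
    (hXY : IndepFun X Y P) (hX : AEMeasurable X P) (hY : Integrable Y P)
    (hf : AEStronglyMeasurable f (P.map X)) :
    ∫ ω, f (X ω) * (Y ω - ∫ ω', Y ω' ∂P) ∂P = 0 := by
  rw [hXY.integral_fun_comp_mul_comp (g := fun y => y - ∫ ω', Y ω' ∂P) hX hY.aemeasurable hf
    (by fun_prop), integral_sub hY (integrable_const _)]
  simp

theorem switching_value_nonneg_general
    {Ω : Type*} [MeasurableSpace Ω] (P : Measure Ω) [IsProbabilityMeasure P]
    (ε θ : Ω → ℝ) (μ0 : ℝ) (hindep : IndepFun ε θ P)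
    (hε : Integrable ε P) (hθ : Integrable θ P) :
    (∫ ω, max (μ0 + ε ω) (θ ω) ∂P) ≥ ∫ ω, max (μ0 + ε ω) (∫ ω', θ ω' ∂P) ∂P := by
  set c := ∫ ω', θ ω' ∂P
  set s : ℝ → ℝ := fun x => if μ0 + x ≤ c then 1 else 0
  have hs : Measurable s :=
    Measurable.ite (measurableSet_le (by fun_prop) measurable_const) measurable_const
      measurable_const
  have hμε : Integrable (fun ω => μ0 + ε ω) P := (integrable_const μ0).add hε
  have hmax_c : Integrable (fun ω => max (μ0 + ε ω) c) P := hμε.sup (integrable_const c)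
  have hcorr : Integrable (fun ω => s (ε ω) * (θ ω - c)) P :=
    (hθ.sub (integrable_const c)).bdd_mul
      (hs.comp_aemeasurable hε.aemeasurable).aestronglyMeasurable (c := 1)
      (.of_forall fun ω => by dsimp only [s]; split_ifs <;> simp)
  calc ∫ ω, max (μ0 + ε ω) c ∂P
      = ∫ ω, (max (μ0 + ε ω) c + s (ε ω) * (θ ω - c)) ∂P := by
        rw [integral_add hmax_c hcorr, left_eq_add]
        exact hindep.integral_comp_mul_sub_integral hε.aemeasurable hθ hs.aestronglyMeasurable
    _ ≤ ∫ ω, max (μ0 + ε ω) (θ ω) ∂P :=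
        integral_mono (hmax_c.add hcorr) (hμε.sup hθ) fun _ => max_add_ite_mul_sub_le _ _ _

/-- Non-negativity of the switching value (Theorem 1): if `ε` and `θ` are independent
integrable real random variables and `max (μ0 + ε) θ` is integrable, then
`E[max (μ0 + ε) θ] ≥ E[max (μ0 + ε) E[θ]]`. -/
theorem switching_value_nonneg
    {Ω : Type*} [MeasurableSpace Ω] (P : Measure Ω) [IsProbabilityMeasure P]
    (ε θ : Ω → ℝ) (μ0 : ℝ) (hindep : IndepFun ε θ P)
    (hε : Integrable ε P) (hθ : Integrable θ P)
    (hmax : Integrable (fun ω => max (μ0 + ε ω) (θ ω)) P) :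
    (∫ ω, max (μ0 + ε ω) (θ ω) ∂P) ≥ ∫ ω, max (μ0 + ε ω) (∫ ω', θ ω' ∂P) ∂P :=
  switching_value_nonneg_general P ε θ μ0 hindep hε hθ
end

section
/- Let σ > 0 and let μ0, μ1 be real numbers with μ1 < μ0. Then ∫ max(μ0 + x, μ1) d(gaussianReal 0 σ²)(x) − μ0 > 0. (Strict positivity of the catalytic value under non-degenerate Gaussian status-quo uncertainty, Theorem 1.) -/
open MeasureTheory ProbabilityTheory
open scoped NNReal

/-!
If `X` has law `gaussianReal μ0 σ²`, then `max X μ1 ≥ X`, strictly on `{X < μ1}`. A nondegenerate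
Gaussian charges every half-line, so taking expectations gives `𝔼[max X μ1] > 𝔼[X] = μ0`.
-/

theorem MeasureTheory.integral_lt_integral_of_ae_le_of_measure_setOf_lt_ne_zero
    {α : Type*} [MeasurableSpace α] {μ : Measure α} {f g : α → ℝ}
    (hf : Integrable f μ) (hg : Integrable g μ) (hle : f ≤ᵐ[μ] g)
    (hlt : μ {x | f x < g x} ≠ 0) :
    ∫ x, f x ∂μ < ∫ x, g x ∂μ := by
  rw [← sub_pos, ← integral_sub hg hf,
    integral_pos_iff_support_of_nonneg_ae (hle.mono fun x => sub_nonneg.2) (hg.sub hf)]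
  refine pos_iff_ne_zero.2 (mt (measure_mono_null ?_) hlt)
  exact fun x hx => (sub_pos.2 hx).ne'

theorem MeasureTheory.integral_lt_integral_max_const
    {α : Type*} [MeasurableSpace α] {μ : Measure α} [IsFiniteMeasure μ] {f : α → ℝ}
    (hf : Integrable f μ) {c : ℝ} (hc : μ {x | f x < c} ≠ 0) :
    ∫ x, f x ∂μ < ∫ x, max (f x) c ∂μ := by
  refine integral_lt_integral_of_ae_le_of_measure_setOf_lt_ne_zero hf
    (hf.sup (integrable_const c)) (ae_of_all _ fun x => le_max_left _ _) ?_
  simpa only [lt_max_iff, lt_irrefl, false_or] using hc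

theorem ProbabilityTheory.lt_integral_max_gaussianReal (m c : ℝ) {v : ℝ≥0} (hv : v ≠ 0) :
    m < ∫ x, max x c ∂gaussianReal m v := by
  have hpos : gaussianReal m v (Set.Iio c) ≠ 0 := fun h =>
    by simpa using gaussianReal_absolutelyContinuous' m hv h
  calc m = ∫ x, x ∂gaussianReal m v := integral_id_gaussianReal.symm
    _ < ∫ x, max x c ∂gaussianReal m v :=
      integral_lt_integral_max_const
        ((memLp_id_gaussianReal' 1 ENNReal.one_ne_top).integrable le_rfl) hpos

theorem catalytic_value_pos_gaussian_general
    (σ : ℝ) (hσ : 0 < σ) (μ0 μ1 : ℝ) :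
    0 < (∫ x, max (μ0 + x) μ1 ∂(gaussianReal 0 ⟨σ ^ 2, sq_nonneg σ⟩)) - μ0 := by
  have hv : (⟨σ ^ 2, sq_nonneg σ⟩ : ℝ≥0) ≠ 0 := fun h =>
    hσ.ne' (pow_eq_zero_iff two_ne_zero |>.1 (congrArg NNReal.toReal h))
  have hshift (v : ℝ≥0) : ∫ x, max (μ0 + x) μ1 ∂gaussianReal 0 v
      = ∫ y, max y μ1 ∂gaussianReal μ0 v := by
    rw [← zero_add μ0, ← gaussianReal_map_const_add,
      integral_map (measurable_const_add _).aemeasurable (by fun_prop), zero_add]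
  exact sub_pos.2 ((lt_integral_max_gaussianReal μ0 μ1 hv).trans_eq (hshift _).symm)

/-- Strict positivity of the catalytic value under non-degenerate Gaussian
status-quo uncertainty (Theorem 1). -/
theorem catalytic_value_pos_gaussian
    (σ : ℝ) (hσ : 0 < σ) (μ0 μ1 : ℝ) (hlt : μ1 < μ0) :
    0 < (∫ x, max (μ0 + x) μ1 ∂(gaussianReal 0 ⟨σ ^ 2, sq_nonneg σ⟩)) - μ0 :=
  catalytic_value_pos_gaussian_general σ hσ μ0 μ1
end

section
/- Fix Δ > 0. For every σ > 0, the function σ ↦ V(σ, Δ) has derivative φ(−Δ/σ) at σ, and this derivative satisfies 0 < φ(−Δ/σ) ≤ 1/√(2π). In particular V(·, Δ) is strictly increasing on (0, ∞) with marginal effect bounded by 1/√(2π). (Proposition 2, parts 1 and 2.) -/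
open MeasureTheory

/-- The standard normal density `φ`. -/
noncomputable def stdNormalPDF (x : ℝ) : ℝ :=
  (Real.sqrt (2 * Real.pi))⁻¹ * Real.exp (-x ^ 2 / 2)

/-- The standard normal CDF `Φ`. -/
noncomputable def stdNormalCDF (x : ℝ) : ℝ :=
  ∫ t in Set.Iic x, stdNormalPDF t

/-- The catalytic value `V(σ, Δ) = -Δ·Φ(-Δ/σ) + σ·φ(-Δ/σ)`. -/
noncomputable def catalyticValue (σ Δ : ℝ) : ℝ :=
  -Δ * stdNormalCDF (-Δ / σ) + σ * stdNormalPDF (-Δ / σ)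

/-! Differentiating `V` in `σ`, the chain-rule terms `-Δ·φ(-Δ/σ)·Δ/σ²` (from `Φ`) and
`σ·(Δ/σ)·φ(-Δ/σ)·Δ/σ²` (from `φ' = -x φ`) cancel, leaving only `φ(-Δ/σ)`; positivity of the
density then gives strict monotonicity, and `exp(-x²/2) ≤ 1` the bound. -/

theorem hasDerivAt_integral_Iic {E : Type*} [NormedAddCommGroup E] [NormedSpace ℝ E]
    [CompleteSpace E] {f : ℝ → E} (hf : Integrable f) {x : ℝ} (hfx : ContinuousAt f x) :
    HasDerivAt (fun y => ∫ t in Set.Iic y, f t) (f x) x := by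
  have hsplit : (fun y => ∫ t in Set.Iic y, f t) =
      fun y => (∫ t in Set.Iic 0, f t) + ∫ t in (0 : ℝ)..y, f t := by
    funext y
    rw [← intervalIntegral.integral_Iic_sub_Iic hf.integrableOn hf.integrableOn]
    abel
  rw [hsplit]
  exact (intervalIntegral.integral_hasDerivAt_right hf.intervalIntegrable
    hf.aestronglyMeasurable.stronglyMeasurableAtFilter hfx).const_add _

theorem stdNormalPDF_eq_gaussianPDFReal : stdNormalPDF = ProbabilityTheory.gaussianPDFReal 0 1 := by
  funext x
  simp [stdNormalPDF, ProbabilityTheory.gaussianPDFReal]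

theorem continuous_stdNormalPDF : Continuous stdNormalPDF := by
  unfold stdNormalPDF
  fun_prop

theorem stdNormalPDF_pos (x : ℝ) : 0 < stdNormalPDF x := by
  rw [stdNormalPDF_eq_gaussianPDFReal]
  exact ProbabilityTheory.gaussianPDFReal_pos _ _ _ one_ne_zero

theorem stdNormalPDF_le_one_div_sqrt (x : ℝ) : stdNormalPDF x ≤ 1 / Real.sqrt (2 * Real.pi) := by
  have hexp : Real.exp (-x ^ 2 / 2) ≤ 1 := Real.exp_le_one_iff.mpr (by nlinarith [sq_nonneg x])
  rw [stdNormalPDF, one_div]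
  exact mul_le_of_le_one_right (by positivity) hexp

theorem hasDerivAt_stdNormalCDF (x : ℝ) : HasDerivAt stdNormalCDF (stdNormalPDF x) x := by
  refine hasDerivAt_integral_Iic ?_ continuous_stdNormalPDF.continuousAt
  rw [stdNormalPDF_eq_gaussianPDFReal]
  exact ProbabilityTheory.integrable_gaussianPDFReal 0 1

theorem hasDerivAt_stdNormalPDF (x : ℝ) : HasDerivAt stdNormalPDF (-x * stdNormalPDF x) x := by
  have hq : HasDerivAt (fun y : ℝ => -y ^ 2 / 2) (-x) x :=
    ((hasDerivAt_pow 2 x).neg.div_const 2).congr_deriv (by norm_num; ring)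
  unfold stdNormalPDF
  exact (hq.exp.const_mul _).congr_deriv (by ring)

theorem hasDerivAt_catalyticValue_sigma (Δ : ℝ) {σ : ℝ} (hσ : σ ≠ 0) :
    HasDerivAt (fun s => catalyticValue s Δ) (stdNormalPDF (-Δ / σ)) σ := by
  have hz : HasDerivAt (fun s : ℝ => -Δ / s) (Δ / σ ^ 2) σ := by
    simpa [div_eq_mul_inv] using (hasDerivAt_inv hσ).const_mul (-Δ)
  have hV := ((hasDerivAt_stdNormalCDF _).comp σ hz).const_mul (-Δ) |>.add
    ((hasDerivAt_id σ).mul ((hasDerivAt_stdNormalPDF _).comp σ hz))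
  refine hV.congr_deriv ?_
  simp only [Function.comp_apply, id]
  field_simp
  ring

theorem strictMonoOn_catalyticValue_sigma (Δ : ℝ) :
    StrictMonoOn (fun σ => catalyticValue σ Δ) (Set.Ioi 0) := by
  have hderiv (σ : ℝ) (hσ : σ ∈ Set.Ioi 0) :=
    hasDerivAt_catalyticValue_sigma Δ (ne_of_gt hσ)
  refine strictMonoOn_of_hasDerivWithinAt_pos (convex_Ioi 0)
    (fun σ hσ => (hderiv σ hσ).continuousAt.continuousWithinAt) (fun σ hσ => ?_)
    (fun σ _ => stdNormalPDF_pos (-Δ / σ))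
  rw [interior_Ioi] at hσ
  exact (hderiv σ hσ).hasDerivWithinAt

theorem catalyticValue_deriv_sigma_general (Δ : ℝ) :
    (∀ σ : ℝ, 0 < σ →
      HasDerivAt (fun s => catalyticValue s Δ) (stdNormalPDF (-Δ / σ)) σ ∧
      0 < stdNormalPDF (-Δ / σ) ∧
      stdNormalPDF (-Δ / σ) ≤ 1 / Real.sqrt (2 * Real.pi)) ∧
    StrictMonoOn (fun σ => catalyticValue σ Δ) (Set.Ioi 0) :=
  ⟨fun _ hσ => ⟨hasDerivAt_catalyticValue_sigma Δ hσ.ne', stdNormalPDF_pos _,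
      stdNormalPDF_le_one_div_sqrt _⟩,
    strictMonoOn_catalyticValue_sigma Δ⟩

/-- Proposition 2, parts 1 and 2: for fixed `Δ > 0`, the catalytic value has derivative
`φ(-Δ/σ)` in `σ`, which lies in `(0, 1/√(2π)]`; hence `V(·, Δ)` is strictly increasing
on `(0, ∞)`. -/
theorem catalyticValue_deriv_sigma (Δ : ℝ) (hΔ : 0 < Δ) :
    (∀ σ : ℝ, 0 < σ →
      HasDerivAt (fun s => catalyticValue s Δ) (stdNormalPDF (-Δ / σ)) σ ∧
      0 < stdNormalPDF (-Δ / σ) ∧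
      stdNormalPDF (-Δ / σ) ≤ 1 / Real.sqrt (2 * Real.pi)) ∧
    StrictMonoOn (fun σ => catalyticValue σ Δ) (Set.Ioi 0) :=
  catalyticValue_deriv_sigma_general Δ
end

section
/- Fix σ > 0. For every Δ > 0, the function Δ ↦ φ(−Δ/σ) (which equals the marginal effect ∂V/∂σ of uncertainty on the catalytic value) has derivative −(Δ/σ²)·φ(−Δ/σ) at Δ, and this derivative is strictly negative; equivalently, the marginal catalytic value of uncertainty is strictly increasing in the challenger quality μ1 = μ0 − Δ. (Cross-effect, Proposition 2, part 3.) -/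
open MeasureTheory

theorem hasDerivAt_stdNormalPDF_neg_div (σ Δ : ℝ) (hσ : σ ≠ 0) :
    HasDerivAt (fun d => stdNormalPDF (-d / σ)) (-(Δ / σ ^ 2) * stdNormalPDF (-Δ / σ)) Δ := by
  have hinner : HasDerivAt (fun d : ℝ => -d / σ) (-1 / σ) Δ := by
    simpa using (hasDerivAt_neg Δ).div_const σ
  refine ((hasDerivAt_stdNormalPDF (-Δ / σ)).comp Δ hinner).congr_deriv ?_
  field_simp

/-- Cross-effect (Proposition 2, part 3): for fixed `σ > 0` and `Δ > 0`, the marginal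
effect `φ(-Δ/σ)` of uncertainty on the catalytic value has derivative
`-(Δ/σ²)·φ(-Δ/σ) < 0` in `Δ`; equivalently, the marginal catalytic value of
uncertainty is strictly increasing in the challenger quality `μ1 = μ0 - Δ`. -/
theorem catalyticValue_cross_effect (σ : ℝ) (hσ : 0 < σ) :
    ∀ Δ : ℝ, 0 < Δ →
      HasDerivAt (fun d => stdNormalPDF (-d / σ))
        (-(Δ / σ ^ 2) * stdNormalPDF (-Δ / σ)) Δ ∧
      -(Δ / σ ^ 2) * stdNormalPDF (-Δ / σ) < 0 := by
  intro Δ hΔ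
  refine ⟨hasDerivAt_stdNormalPDF_neg_div σ Δ hσ.ne', ?_⟩
  have hslope : 0 < Δ / σ ^ 2 := by positivity
  exact mul_neg_of_neg_of_pos (neg_neg_of_pos hslope) (stdNormalPDF_pos _)
end

section
/- Let σ > 0, γ > 0, and let μ0, μ1 be real numbers with μ1 < μ0; set Δ = μ0 − μ1. Then ∫ exp(−γ·max(μ0 + x, μ1)) d(gaussianReal 0 σ²)(x) = exp(−γμ1)·Φ(−Δ/σ) + exp(−γμ0 + γ²σ²/2)·(1 − Φ((γσ² − Δ)/σ)). (CARA expected utility from exploration, computed in the proof of Proposition 3.) -/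
open MeasureTheory ProbabilityTheory

lemma stdNormalPDF_nonneg (x : ℝ) : 0 ≤ stdNormalPDF x := by
  unfold stdNormalPDF
  positivity

lemma integrable_stdNormalPDF : Integrable stdNormalPDF := by
  have h : Integrable (fun x : ℝ => Real.exp (-(1/2) * x ^ 2)) :=
    integrable_exp_neg_mul_sq (by norm_num)
  have := h.const_mul (Real.sqrt (2 * Real.pi))⁻¹
  refine this.congr (Filter.Eventually.of_forall fun x => ?_)
  unfold stdNormalPDF
  ring_nf

lemma integral_stdNormalPDF : ∫ x, stdNormalPDF x = 1 := by
  unfold stdNormalPDF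
  rw [integral_const_mul]
  have h : ∀ x : ℝ, Real.exp (-x ^ 2 / 2) = Real.exp (-(1/2) * x ^ 2) := by
    intro x; ring_nf
  simp_rw [h]
  rw [integral_gaussian]
  have h2 : Real.pi / (1/2) = 2 * Real.pi := by ring
  rw [h2, inv_mul_cancel₀]
  positivity

lemma integral_Ioi_stdNormalPDF (c : ℝ) :
    ∫ t in Set.Ioi c, stdNormalPDF t = 1 - stdNormalCDF c := by
  have h := intervalIntegral.integral_Iic_add_Ioi (b := c) (μ := volume) (f := stdNormalPDF)
    integrable_stdNormalPDF.integrableOn integrable_stdNormalPDF.integrableOn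
  rw [integral_stdNormalPDF] at h
  unfold stdNormalCDF
  linarith

lemma integral_Ioi_shift (g : ℝ → ℝ) (a c : ℝ) :
    ∫ t in Set.Ioi a, g (t + c) = ∫ s in Set.Ioi (a + c), g s := by
  rw [← integral_indicator measurableSet_Ioi, ← integral_indicator measurableSet_Ioi,
    ← MeasureTheory.integral_add_right_eq_self
      (Set.indicator (Set.Ioi (a + c)) g) c]
  congr 1
  funext x
  by_cases hx : a < x
  · rw [Set.indicator_of_mem (by simp [hx] : x + c ∈ Set.Ioi (a + c)),
      Set.indicator_of_mem (by simpa : x ∈ Set.Ioi a)]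
  · have hx' : x ≤ a := not_lt.mp hx
    rw [Set.indicator_of_notMem (by simp [hx'] : x + c ∉ Set.Ioi (a + c)),
      Set.indicator_of_notMem (by simpa using hx' : x ∉ Set.Ioi a)]

/-- CARA expected utility from exploration (proof of Proposition 3): with
`Δ = μ0 - μ1 > 0`,
`∫ exp(-γ·max(μ0 + x, μ1)) dN(0, σ²)
  = exp(-γμ1)·Φ(-Δ/σ) + exp(-γμ0 + γ²σ²/2)·(1 - Φ((γσ² - Δ)/σ))`. -/
theorem cara_expected_utility_exploration
    (σ γ : ℝ) (hσ : 0 < σ) (hγ : 0 < γ) (μ0 μ1 Δ : ℝ)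
    (hΔdef : Δ = μ0 - μ1) (hlt : μ1 < μ0) :
    (∫ x, Real.exp (-γ * max (μ0 + x) μ1)
        ∂(gaussianReal 0 ⟨σ ^ 2, sq_nonneg σ⟩)) =
      Real.exp (-γ * μ1) * stdNormalCDF (-Δ / σ) +
        Real.exp (-γ * μ0 + γ ^ 2 * σ ^ 2 / 2) *
          (1 - stdNormalCDF ((γ * σ ^ 2 - Δ) / σ)) := by
  have hσ2 : (⟨σ ^ 2, sq_nonneg σ⟩ : NNReal) ≠ 0 := by
    intro h
    have : σ ^ 2 = 0 := congrArg NNReal.toReal h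
    nlinarith
  set v : NNReal := ⟨σ ^ 2, sq_nonneg σ⟩ with hv
  set f : ℝ → ℝ := fun x => Real.exp (-γ * max (μ0 + x) μ1) with hf
  -- Step 1: integral against the Gaussian measure as a Lebesgue integral
  have step1 : (∫ x, f x ∂(gaussianReal 0 v)) = ∫ x, gaussianPDFReal 0 v x * f x := by
    rw [gaussianReal_of_var_ne_zero _ hσ2]
    have hpdf : gaussianPDF 0 v = fun x => ((Real.toNNReal (gaussianPDFReal 0 v x)) : ENNReal) :=
      rfl
    rw [hpdf, integral_withDensity_eq_integral_smul
      (by exact (measurable_gaussianPDFReal 0 v).real_toNNReal)]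
    congr 1
    funext x
    rw [NNReal.smul_def, Real.coe_toNNReal _ (gaussianPDFReal_nonneg 0 v x), smul_eq_mul]
  -- Step 2: change of variables x = σ t
  have hpdfval : ∀ t : ℝ, gaussianPDFReal 0 v (σ * t) = σ⁻¹ * stdNormalPDF t := by
    intro t
    unfold gaussianPDFReal stdNormalPDF
    have hvv : (v : ℝ) = σ ^ 2 := rfl
    rw [hvv]
    have h1 : Real.sqrt (2 * Real.pi * σ ^ 2) = Real.sqrt (2 * Real.pi) * σ := by
      rw [Real.sqrt_mul (by positivity), Real.sqrt_sq hσ.le]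
    rw [h1]
    have h2 : -(σ * t - 0) ^ 2 / (2 * σ ^ 2) = -t ^ 2 / 2 := by
      field_simp
      ring
    rw [h2, mul_inv]
    ring
  have step2 : (∫ x, gaussianPDFReal 0 v x * f x) = ∫ t, stdNormalPDF t * f (σ * t) := by
    have h := Measure.integral_comp_mul_left (fun x => gaussianPDFReal 0 v x * f x) σ
    rw [abs_of_pos (inv_pos.mpr hσ), smul_eq_mul] at h
    have h2 : (∫ x, gaussianPDFReal 0 v x * f x)
        = σ * ∫ x, gaussianPDFReal 0 v (σ * x) * f (σ * x) := by
      rw [h, ← mul_assoc, mul_inv_cancel₀ hσ.ne', one_mul]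
    rw [h2, ← integral_const_mul]
    congr 1
    funext t
    rw [hpdfval t, ← mul_assoc, ← mul_assoc, mul_inv_cancel₀ hσ.ne', one_mul]
  -- the integrand is dominated by a multiple of the std normal pdf
  have hbound : ∀ t : ℝ, |stdNormalPDF t * f (σ * t)| ≤ Real.exp (-γ * μ1) * stdNormalPDF t := by
    intro t
    rw [abs_mul, abs_of_nonneg (stdNormalPDF_nonneg t), abs_of_nonneg (Real.exp_pos _).le]
    rw [mul_comm (Real.exp (-γ * μ1))]
    apply mul_le_mul_of_nonneg_left _ (stdNormalPDF_nonneg t)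
    apply Real.exp_le_exp.mpr
    have : μ1 ≤ max (μ0 + σ * t) μ1 := le_max_right _ _
    nlinarith
  have hmeas : AEStronglyMeasurable (fun t => stdNormalPDF t * f (σ * t)) volume := by
    apply AEStronglyMeasurable.mul
    · exact (Continuous.aestronglyMeasurable (by unfold stdNormalPDF; continuity))
    · exact (Continuous.aestronglyMeasurable (by unfold f; continuity))
  have hint : Integrable (fun t => stdNormalPDF t * f (σ * t)) := by
    refine Integrable.mono (integrable_stdNormalPDF.const_mul (Real.exp (-γ * μ1))) hmeas ?_
    refine Filter.Eventually.of_forall fun t => ?_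
    rw [Real.norm_eq_abs, Real.norm_eq_abs]
    calc |stdNormalPDF t * f (σ * t)| ≤ Real.exp (-γ * μ1) * stdNormalPDF t := hbound t
      _ ≤ |Real.exp (-γ * μ1) * stdNormalPDF t| := le_abs_self _
  -- Step 3: split the integral at c = -Δ/σ
  set c : ℝ := -Δ / σ with hc
  have step3 : (∫ t, stdNormalPDF t * f (σ * t)) =
      (∫ t in Set.Iic c, stdNormalPDF t * f (σ * t)) +
      ∫ t in Set.Ioi c, stdNormalPDF t * f (σ * t) :=
    (intervalIntegral.integral_Iic_add_Ioi hint.integrableOn hint.integrableOn).symm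
  -- on Iic c, the max is μ1
  have piece1 : (∫ t in Set.Iic c, stdNormalPDF t * f (σ * t)) =
      Real.exp (-γ * μ1) * stdNormalCDF c := by
    unfold stdNormalCDF
    rw [← integral_const_mul]
    apply setIntegral_congr_fun measurableSet_Iic
    intro t ht
    simp only [Set.mem_Iic] at ht
    have hmax : max (μ0 + σ * t) μ1 = μ1 := by
      apply max_eq_right
      have h1 : σ * t ≤ σ * c := mul_le_mul_of_nonneg_left ht hσ.le
      have hcc : σ * c = -Δ := by
        rw [hc, mul_div_assoc', mul_comm, mul_div_assoc, div_self hσ.ne', mul_one]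
      rw [hcc] at h1
      linarith
    show stdNormalPDF t * Real.exp (-γ * max (μ0 + σ * t) μ1) = _
    rw [hmax]
    ring
  -- on Ioi c, the max is μ0 + σt; complete the square
  have piece2 : (∫ t in Set.Ioi c, stdNormalPDF t * f (σ * t)) =
      Real.exp (-γ * μ0 + γ ^ 2 * σ ^ 2 / 2) * (1 - stdNormalCDF (c + γ * σ)) := by
    have key : ∀ t ∈ Set.Ioi c, stdNormalPDF t * f (σ * t) =
        Real.exp (-γ * μ0 + γ ^ 2 * σ ^ 2 / 2) * stdNormalPDF (t + γ * σ) := by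
      intro t ht
      simp only [Set.mem_Ioi] at ht
      have hmax : max (μ0 + σ * t) μ1 = μ0 + σ * t := by
        apply max_eq_left
        have h1 : σ * c < σ * t := mul_lt_mul_of_pos_left ht hσ
        have hcc : σ * c = -Δ := by
          rw [hc, mul_div_assoc', mul_comm, mul_div_assoc, div_self hσ.ne', mul_one]
        rw [hcc] at h1
        linarith
      show stdNormalPDF t * Real.exp (-γ * max (μ0 + σ * t) μ1) = _
      rw [hmax]
      unfold stdNormalPDF
      have hexp : Real.exp (-t ^ 2 / 2) * Real.exp (-γ * (μ0 + σ * t)) =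
          Real.exp (-γ * μ0 + γ ^ 2 * σ ^ 2 / 2) * Real.exp (-(t + γ * σ) ^ 2 / 2) := by
        rw [← Real.exp_add, ← Real.exp_add]
        congr 1
        ring
      rw [mul_assoc, hexp]
      ring
    rw [setIntegral_congr_fun measurableSet_Ioi key, integral_const_mul,
      integral_Ioi_shift stdNormalPDF c (γ * σ), integral_Ioi_stdNormalPDF]
  -- put everything together
  rw [step1, step2, step3, piece1, piece2]
  have harg : c + γ * σ = (γ * σ ^ 2 - Δ) / σ := by
    rw [hc, div_add' _ _ _ hσ.ne']
    congr 1
    ring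
  rw [harg]
end

section
/- Let (Ω, P) be a probability space and let X be a real-valued random variable with X ∈ L²(P). Then for every a ∈ ℝ, Var(max(X, a)) ≤ Var(X): truncating the left tail of a random variable weakly decreases its variance. (Variance-reduction step in the proof of Proposition 3.) -/
open MeasureTheory ProbabilityTheory

section

variable {Ω : Type*} [MeasurableSpace Ω] {μ : Measure Ω} [IsProbabilityMeasure μ]

lemma variance_le_integral_sub_const_sq {Y : Ω → ℝ} (hY : AEStronglyMeasurable Y μ) (c : ℝ) :
    Var[Y; μ] ≤ ∫ ω, (Y ω - c) ^ 2 ∂μ := by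
  rw [← variance_sub_const hY c]
  exact variance_le_expectation_sq (hY.sub aestronglyMeasurable_const)

/-- Compare `f ∘ X` with the constant `f μ[X]`: the variance is the least mean square
deviation from a constant. -/
lemma LipschitzWith.variance_comp_le {K : NNReal} {f : ℝ → ℝ} (hf : LipschitzWith K f)
    {X : Ω → ℝ} (hX : MemLp X 2 μ) :
    Var[fun ω ↦ f (X ω); μ] ≤ K ^ 2 * Var[X; μ] := by
  have hfX : AEStronglyMeasurable (fun ω ↦ f (X ω)) μ :=
    hf.continuous.comp_aestronglyMeasurable hX.aestronglyMeasurable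
  have hdev (x y : ℝ) : (f x - f y) ^ 2 ≤ K ^ 2 * (x - y) ^ 2 := by
    rw [← mul_pow, sq_le_sq, abs_mul, NNReal.abs_eq]
    simpa only [Real.dist_eq] using hf.dist_le_mul x y
  calc Var[fun ω ↦ f (X ω); μ] ≤ ∫ ω, (f (X ω) - f μ[X]) ^ 2 ∂μ :=
        variance_le_integral_sub_const_sq hfX _
    _ ≤ ∫ ω, K ^ 2 * (X ω - μ[X]) ^ 2 ∂μ :=
        integral_mono_of_nonneg (ae_of_all _ fun _ ↦ sq_nonneg _)
          ((hX.sub (memLp_const _)).integrable_sq.const_mul _) (ae_of_all _ fun ω ↦ hdev _ _)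
    _ = K ^ 2 * Var[X; μ] := by
        rw [integral_const_mul, variance_eq_integral hX.aestronglyMeasurable.aemeasurable]

end

/-- Variance-reduction step in the proof of Proposition 3: truncating the left tail
of a square-integrable random variable weakly decreases its variance:
`Var(max(X, a)) ≤ Var(X)`. -/
theorem variance_max_le
    {Ω : Type*} [MeasurableSpace Ω] (P : Measure Ω) [IsProbabilityMeasure P]
    (X : Ω → ℝ) (hX : MemLp X 2 P) (a : ℝ) :
    variance (fun ω => max (X ω) a) P ≤ variance X P := by
  simpa using (LipschitzWith.id.max_const a).variance_comp_le hX
end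

section
/- Let σ > 0 and μ0 ∈ ℝ. Then for every t ∈ ℝ, the function t ↦ ∫ max(μ0 + x, t) d(gaussianReal 0 σ²)(x) has derivative Φ((t − μ0)/σ) at t. In particular, the marginal effect of challenger quality on the option value equals the probability that the challenger beats the status quo. (Derivative ∂V^{IC}/∂θ = Pr(θ > μ0 + ε), used in Proposition 6.) -/
open MeasureTheory ProbabilityTheory

/-!
For a fixed `x`, the map `u ↦ max x u` is `1`-Lipschitz and, away from `u = x`, has derivative
`1` if `x < u` and `0` if `x > u`. Dominated differentiation under the integral therefore gives
`d/dt E[max X t] = P(X < t)` for any integrable `X` without an atom at `t`. Shifting the centred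
Gaussian by `μ0` turns the option value into `E[max X t]` with `X ~ N(μ0, σ²)`, and standardising
gives `P(X < t) = Φ((t - μ0) / σ)`.
-/

open Set
open scoped NNReal

theorem hasDerivAt_const_max_of_ne {a t : ℝ} (h : a ≠ t) :
    HasDerivAt (fun u => max a u) (if a < t then 1 else 0) t := by
  rcases h.lt_or_gt with hlt | hgt
  · rw [if_pos hlt]
    refine (hasDerivAt_id t).congr_of_eventuallyEq ?_
    filter_upwards [Ioi_mem_nhds hlt] with u hu using max_eq_right hu.le
  · rw [if_neg hgt.not_gt]
    refine (hasDerivAt_const t a).congr_of_eventuallyEq ?_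
    filter_upwards [Iio_mem_nhds hgt] with u hu using max_eq_left hu.le

theorem hasDerivAt_integral_max {Ω : Type*} [MeasurableSpace Ω] {μ : Measure Ω}
    [IsFiniteMeasure μ] {X : Ω → ℝ} (hX : Integrable X μ) {t : ℝ}
    (ht : μ {ω | X ω = t} = 0) :
    HasDerivAt (fun u => ∫ ω, max (X ω) u ∂μ) (μ.real {ω | X ω < t}) t := by
  have hlt : NullMeasurableSet {ω | X ω < t} μ :=
    nullMeasurableSet_lt hX.aemeasurable aemeasurable_const
  have hderiv : ∀ᵐ ω ∂μ,
      HasDerivAt (fun u => max (X ω) u) ({ω | X ω < t}.indicator (fun _ => 1) ω) t := by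
    refine measure_mono_null (fun ω hω => ?_) ht
    by_contra hne
    simpa [indicator_apply] using hω (hasDerivAt_const_max_of_ne hne)
  have hlip : ∀ ω, LipschitzOnWith (Real.nnabs 1) (fun u => max (X ω) u) univ := fun ω => by
    rw [map_one]
    exact (LipschitzWith.id.const_max (X ω)).lipschitzOnWith
  have key := hasDerivAt_integral_of_dominated_loc_of_lip (F := fun u ω => max (X ω) u)
    Filter.univ_mem (.of_forall fun u => (hX.sup (integrable_const u)).aestronglyMeasurable)
    (hX.sup (integrable_const t)) (aestronglyMeasurable_const.indicator₀ hlt)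
    (ae_of_all _ hlip) (integrable_const 1) hderiv
  rw [integral_indicator₀ hlt, setIntegral_const, smul_eq_mul, mul_one] at key
  exact key.2

theorem gaussianPDFReal_zero_one : gaussianPDFReal 0 1 = stdNormalPDF := by
  ext x
  simp [gaussianPDFReal, stdNormalPDF]

theorem gaussianReal_zero_one_measureReal_Iio (c : ℝ) :
    (gaussianReal 0 1).real (Iio c) = stdNormalCDF c := by
  rw [measureReal_def, gaussianReal_apply_eq_integral 0 one_ne_zero, ENNReal.toReal_ofReal
      (setIntegral_nonneg measurableSet_Iio fun x _ => gaussianPDFReal_nonneg 0 1 x),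
    gaussianPDFReal_zero_one, stdNormalCDF, integral_Iic_eq_integral_Iio]

theorem gaussianReal_zero_one_map_affine (m : ℝ) (v : ℝ≥0) :
    (gaussianReal 0 1).map (fun x => √v * x + m) = gaussianReal m v := by
  rw [show (fun x => √v * x + m) = (· + m) ∘ (√v * ·) from rfl,
    ← Measure.map_map (measurable_add_const m) (measurable_const_mul _),
    gaussianReal_map_const_mul, gaussianReal_map_add_const]
  congr 1
  · simp
  · ext; simp

theorem gaussianReal_measureReal_Iio (m : ℝ) {v : ℝ≥0} (hv : v ≠ 0) (c : ℝ) :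
    (gaussianReal m v).real (Iio c) = stdNormalCDF ((c - m) / √v) := by
  have hpos : 0 < √(v : ℝ) := Real.sqrt_pos.2 (NNReal.coe_pos.2 (pos_iff_ne_zero.2 hv))
  have hpre : (fun x => √v * x + m) ⁻¹' Iio c = Iio ((c - m) / √v) := by
    ext x
    rw [mem_preimage, mem_Iio, mem_Iio, lt_div_iff₀ hpos]
    constructor <;> intro h <;> linarith
  rw [← gaussianReal_zero_one_map_affine, map_measureReal_apply (by fun_prop) measurableSet_Iio,
    hpre, gaussianReal_zero_one_measureReal_Iio]

/-- Marginal effect of challenger quality on the option value (used in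
Proposition 6): the map `t ↦ ∫ max (μ0 + x) t dN(0, σ²)` has derivative
`Φ((t - μ0)/σ)` at every `t`, i.e. the probability that the challenger beats the
status quo. -/
theorem deriv_option_value_in_challenger_quality
    (σ : ℝ) (hσ : 0 < σ) (μ0 : ℝ) :
    ∀ t : ℝ,
      HasDerivAt
        (fun u => ∫ x, max (μ0 + x) u ∂(gaussianReal 0 ⟨σ ^ 2, sq_nonneg σ⟩))
        (stdNormalCDF ((t - μ0) / σ)) t := by
  intro t
  set v : ℝ≥0 := ⟨σ ^ 2, sq_nonneg σ⟩
  have hv : v ≠ 0 := by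
    rw [ne_eq, ← NNReal.coe_eq_zero]
    exact (pow_pos hσ 2).ne'
  have hσv : √(v : ℝ) = σ := Real.sqrt_sq hσ.le
  have hshift : (fun u => ∫ x, max (μ0 + x) u ∂(gaussianReal 0 v))
      = fun u => ∫ y, max y u ∂(gaussianReal μ0 v) := by
    funext u
    rw [← zero_add μ0, ← gaussianReal_map_const_add, integral_map (by fun_prop) (by fun_prop),
      zero_add]
  have := nullSingletonClass_gaussianReal (μ := μ0) hv
  rw [hshift, ← hσv, ← gaussianReal_measureReal_Iio μ0 hv t]
  exact hasDerivAt_integral_max IsGaussian.integrable_id (by simp)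
end
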